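/- arXiv:1909.11881 — 7 statements merged into one kernel-verified Lean document; each statement's English description precedes it below -/
import Mathlib

section
/- Let x_P, x_E ∈ ℝ³, r ≥ 0, α > 1, with ‖x_E − x_P‖ > r. Define f(x) = ‖x − x_P‖ − α‖x − x_E‖ − r. Then the set Ē = {x ∈ ℝ³ : f(x) ≥ 0} is strictly convex, i.e., for any two distinct points x, y ∈ Ē and any t ∈ (0,1), the point tx + (1−t)y lies in the interior of Ē. -/
open scoped RealInnerProductSpace

set_option maxHeartbeats 1000000

lemma combo_norm_sq {E : Type*} [NormedAddCommGroup E] [InnerProductSpace ℝ E]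
    (x y p : E) (t : ℝ) :
    ‖(t • x + (1 - t) • y) - p‖ ^ 2
      = t * ‖x - p‖ ^ 2 + (1 - t) * ‖y - p‖ ^ 2 - t * (1 - t) * ‖x - y‖ ^ 2 := by
  have h1 : (t • x + (1 - t) • y) - p = t • (x - p) + (1 - t) • (y - p) := by
    simp [smul_sub, sub_smul]; abel
  rw [h1]
  have e1 := norm_add_sq_real (t • (x - p)) ((1 - t) • (y - p))
  have e2 := norm_sub_sq_real (x - p) (y - p)
  have h2 : (x - p) - (y - p) = x - y := by abel
  rw [h2] at e2
  have e3 : ⟪t • (x - p), (1 - t) • (y - p)⟫ = t * (1 - t) * ⟪x - p, y - p⟫ := by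
    rw [real_inner_smul_left, real_inner_smul_right]; ring
  have e4 : ‖t • (x - p)‖ = |t| * ‖x - p‖ := by rw [norm_smul, Real.norm_eq_abs]
  have e5 : ‖(1 - t) • (y - p)‖ = |1 - t| * ‖y - p‖ := by rw [norm_smul, Real.norm_eq_abs]
  rw [e3, e4, e5] at e1
  rw [e1]
  nlinarith [sq_abs t, sq_abs (1 - t)]

lemma key_real (A B a b cz CZ s t r α : ℝ)
    (hr : 0 ≤ r) (hα : 1 < α) (ha : 0 ≤ a) (hb : 0 ≤ b) (hcz : 0 ≤ cz) (hCZ : 0 ≤ CZ)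
    (ht0 : 0 < t) (ht1 : t < 1) (hs : 0 < s)
    (hA : α * a + r ≤ A) (hB : α * b + r ≤ B)
    (idP : CZ ^ 2 = t * A ^ 2 + (1 - t) * B ^ 2 - t * (1 - t) * s ^ 2)
    (idE : cz ^ 2 = t * a ^ 2 + (1 - t) * b ^ 2 - t * (1 - t) * s ^ 2)
    (htri : cz ≤ t * a + (1 - t) * b) :
    0 < CZ - α * cz - r := by
  have h0a : 0 ≤ α * a + r := by positivity
  have h0b : 0 ≤ α * b + r := by positivity
  have hA2 : (α * a + r) ^ 2 ≤ A ^ 2 := by nlinarith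
  have hB2 : (α * b + r) ^ 2 ≤ B ^ 2 := by nlinarith
  have h1 : t * (α * a + r) ^ 2 + (1 - t) * (α * b + r) ^ 2 - t * (1 - t) * s ^ 2 ≤ CZ ^ 2 := by
    nlinarith [mul_le_mul_of_nonneg_left hA2 ht0.le,
      mul_le_mul_of_nonneg_left hB2 (by linarith : (0:ℝ) ≤ 1 - t)]
  have h2 : (α * cz + r) ^ 2
      ≤ α ^ 2 * (t * a ^ 2 + (1 - t) * b ^ 2 - t * (1 - t) * s ^ 2)
        + 2 * α * r * (t * a + (1 - t) * b) + r ^ 2 := by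
    nlinarith [mul_le_mul_of_nonneg_left htri (by positivity : (0:ℝ) ≤ 2 * α * r)]
  have hα2 : 0 < α ^ 2 - 1 := by nlinarith
  have hts : 0 < t * (1 - t) * s ^ 2 :=
    mul_pos (mul_pos ht0 (by linarith)) (by positivity)
  have hsq : (α * cz + r) ^ 2 < CZ ^ 2 := by
    linarith [h1, h2, mul_pos hα2 hts]
  have := lt_of_pow_lt_pow_left₀ 2 hCZ hsq
  linarith

/-- The closure of the evasion space is strictly convex: every proper convex
combination of two distinct points of the set lies in its interior. -/
theorem evasionSpace_strictlyConvex (xP xE : EuclideanSpace ℝ (Fin 3)) (r α : ℝ)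
    (hr : 0 ≤ r) (hα : 1 < α) (hdist : r < ‖xE - xP‖) :
    ∀ x ∈ {x : EuclideanSpace ℝ (Fin 3) | 0 ≤ ‖x - xP‖ - α * ‖x - xE‖ - r},
      ∀ y ∈ {x : EuclideanSpace ℝ (Fin 3) | 0 ≤ ‖x - xP‖ - α * ‖x - xE‖ - r},
        x ≠ y → ∀ t : ℝ, t ∈ Set.Ioo (0 : ℝ) 1 →
          t • x + (1 - t) • y ∈
            interior {x : EuclideanSpace ℝ (Fin 3) | 0 ≤ ‖x - xP‖ - α * ‖x - xE‖ - r} := by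
  intro x hx y hy hxy t ht
  obtain ⟨ht0, ht1⟩ := ht
  set S := {x : EuclideanSpace ℝ (Fin 3) | 0 ≤ ‖x - xP‖ - α * ‖x - xE‖ - r}
  set z := t • x + (1 - t) • y with hz
  have hopen : IsOpen {w : EuclideanSpace ℝ (Fin 3) | 0 < ‖w - xP‖ - α * ‖w - xE‖ - r} := by
    have hc : Continuous fun w : EuclideanSpace ℝ (Fin 3) =>
        ‖w - xP‖ - α * ‖w - xE‖ - r := by fun_prop
    exact isOpen_lt
      (g := fun w : EuclideanSpace ℝ (Fin 3) => ‖w - xP‖ - α * ‖w - xE‖ - r)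
      continuous_const hc
  have hsub : {w : EuclideanSpace ℝ (Fin 3) | 0 < ‖w - xP‖ - α * ‖w - xE‖ - r} ⊆ S := by
    intro w hw
    simp only [Set.mem_setOf_eq] at hw ⊢
    exact hw.le
  have hxS : 0 ≤ ‖x - xP‖ - α * ‖x - xE‖ - r := hx
  have hyS : 0 ≤ ‖y - xP‖ - α * ‖y - xE‖ - r := hy
  have hs : (0 : ℝ) < ‖x - y‖ := by
    rw [norm_pos_iff]; exact sub_ne_zero_of_ne hxy
  have idP := combo_norm_sq x y xP t
  have idE := combo_norm_sq x y xE t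
  have htri : ‖z - xE‖ ≤ t * ‖x - xE‖ + (1 - t) * ‖y - xE‖ := by
    have h1 : z - xE = t • (x - xE) + (1 - t) • (y - xE) := by
      simp [hz, smul_sub, sub_smul]; abel
    rw [h1]
    calc ‖t • (x - xE) + (1 - t) • (y - xE)‖
        ≤ ‖t • (x - xE)‖ + ‖(1 - t) • (y - xE)‖ := norm_add_le _ _
      _ = t * ‖x - xE‖ + (1 - t) * ‖y - xE‖ := by
          rw [norm_smul, norm_smul, Real.norm_eq_abs, Real.norm_eq_abs,
            abs_of_pos ht0, abs_of_pos (by linarith : (0:ℝ) < 1 - t)]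
  have key : 0 < ‖z - xP‖ - α * ‖z - xE‖ - r :=
    key_real ‖x - xP‖ ‖y - xP‖ ‖x - xE‖ ‖y - xE‖ ‖z - xE‖ ‖z - xP‖ ‖x - y‖ t r α
      hr hα (norm_nonneg _) (norm_nonneg _) (norm_nonneg _) (norm_nonneg _)
      ht0 ht1 hs (by linarith) (by linarith) idP idE htri
  exact interior_maximal hsub hopen key
end

section
/- Fix x_E, x_P ∈ ℝ³ with ‖x_E − x_P‖ > r ≥ 0 and α > 1. For any unit vector e ∈ ℝ³, the equation ‖x_E + ρe − x_P‖ = αρ + r for ρ > 0 has the unique solution ρ = (h₁ + h₂)/(α² − 1), where h₁ = (x_E − x_P)ᵀe − αr and h₂ = √(h₁² + (α² − 1)(‖x_E − x_P‖₂² − r²)). -/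
open RealInnerProductSpace

/-- Unique positive polar-radius solution parameterizing the boundary of the
evasion space in the direction of the unit vector `e`. -/
theorem evasionBoundary_polar_unique (xP xE : EuclideanSpace ℝ (Fin 3)) (r α : ℝ)
    (hr : 0 ≤ r) (hα : 1 < α) (hdist : r < ‖xE - xP‖)
    (e : EuclideanSpace ℝ (Fin 3)) (he : ‖e‖ = 1) (ρ : ℝ) (hρ : 0 < ρ) :
    ‖xE + ρ • e - xP‖ = α * ρ + r ↔
      ρ = ((⟪xE - xP, e⟫ - α * r) +
            Real.sqrt ((⟪xE - xP, e⟫ - α * r) ^ 2 +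
              (α ^ 2 - 1) * (‖xE - xP‖ ^ 2 - r ^ 2))) / (α ^ 2 - 1) := by
  set b := ⟪xE - xP, e⟫ with hb
  set s := ‖xE - xP‖ with hs
  have hspos : 0 < s := lt_of_le_of_lt hr hdist
  have hα1 : (0:ℝ) < α ^ 2 - 1 := by nlinarith
  have hP : 0 < (α ^ 2 - 1) * (s ^ 2 - r ^ 2) := by
    apply mul_pos hα1; nlinarith
  set D := (b - α * r) ^ 2 + (α ^ 2 - 1) * (s ^ 2 - r ^ 2) with hDdef
  have hD : 0 ≤ D := by positivity
  have hsqD : Real.sqrt D ^ 2 = D := Real.sq_sqrt hD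
  have hnorm : ‖xE + ρ • e - xP‖ ^ 2 = s ^ 2 + 2 * ρ * b + ρ ^ 2 := by
    have h1 : xE + ρ • e - xP = (xE - xP) + ρ • e := by abel
    have h2 : ‖ρ • e‖ = ρ := by
      rw [norm_smul, he, Real.norm_eq_abs, abs_of_pos hρ, mul_one]
    rw [h1, norm_add_sq_real, real_inner_smul_right, ← hb, h2]
    ring
  have hRHS : 0 ≤ α * ρ + r := by nlinarith
  constructor
  · intro h
    have hsq : s ^ 2 + 2 * ρ * b + ρ ^ 2 = (α * ρ + r) ^ 2 := by
      rw [← hnorm, h]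
    have hx2 : ((α ^ 2 - 1) * ρ - (b - α * r)) ^ 2 = D := by
      rw [hDdef]; linear_combination (-(α ^ 2 - 1)) * hsq
    have hxpos : 0 < (α ^ 2 - 1) * ρ - (b - α * r) := by
      by_contra h'
      push_neg at h'
      nlinarith [mul_pos hα1 hρ, hP, hx2]
    have hxeq : (α ^ 2 - 1) * ρ - (b - α * r) = Real.sqrt D := by
      rw [← Real.sqrt_sq hxpos.le, hx2]
    rw [eq_div_iff hα1.ne']
    linarith
  · intro h
    have hρeq : ρ * (α ^ 2 - 1) = (b - α * r) + Real.sqrt D := by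
      rw [h]; field_simp
    have hx2 : ((α ^ 2 - 1) * ρ - (b - α * r)) ^ 2 = D := by
      rw [show (α ^ 2 - 1) * ρ - (b - α * r) = Real.sqrt D by linarith, hsqD]
    have h0 : (α ^ 2 - 1) * (s ^ 2 + 2 * ρ * b + ρ ^ 2 - (α * ρ + r) ^ 2) = 0 := by
      linear_combination -hx2
    have hq : s ^ 2 + 2 * ρ * b + ρ ^ 2 = (α * ρ + r) ^ 2 := by
      have := (mul_eq_zero.mp h0).resolve_left hα1.ne'
      linarith
    have hfin : ‖xE + ρ • e - xP‖ ^ 2 = (α * ρ + r) ^ 2 := by rw [hnorm]; exact hq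
    have h2 : ‖xE + ρ • e - xP‖ = |α * ρ + r| := by
      rw [← Real.sqrt_sq (norm_nonneg _), hfin, Real.sqrt_sq_eq_abs]
    rw [h2, abs_of_nonneg hRHS]
end

section
/- With the notation h₁ = (x_E − x_P)ᵀe − αr and h₂ = √(h₁² + (α² − 1)(‖x_E − x_P‖₂² − r²)), where α > 1, r ≥ 0, ‖x_E − x_P‖ > r, and where e depends on an angle ψ with ∂²h₁/∂ψ² = −(x_E − x_P)ᵀe, we have h₂ > ∂²h₁/∂ψ². -/
open RealInnerProductSpace

/-- With `h₁ = ⟪x_E − x_P, e⟫ − αr` and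
`h₂ = √(h₁² + (α² − 1)(‖x_E − x_P‖² − r²))`, and with
`∂²h₁/∂ψ² = −⟪x_E − x_P, e⟫`, we have `h₂ > ∂²h₁/∂ψ²`. -/
theorem h2_gt_d2h1 (xP xE : EuclideanSpace ℝ (Fin 3)) (r α : ℝ)
    (hr : 0 ≤ r) (hα : 1 < α) (hdist : r < ‖xE - xP‖)
    (e : EuclideanSpace ℝ (Fin 3)) (he : ‖e‖ = 1)
    (h₁ d2h₁ h₂ : ℝ)
    (hh₁ : h₁ = ⟪xE - xP, e⟫ - α * r)
    (hd2h₁ : d2h₁ = -⟪xE - xP, e⟫)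
    (hh₂ : h₂ = Real.sqrt (h₁ ^ 2 + (α ^ 2 - 1) * (‖xE - xP‖ ^ 2 - r ^ 2))) :
    d2h₁ < h₂ := by
  have hpos : 0 < (α ^ 2 - 1) * (‖xE - xP‖ ^ 2 - r ^ 2) := by
    have h1 : r ^ 2 < ‖xE - xP‖ ^ 2 := by nlinarith
    have h2 : (1:ℝ) < α ^ 2 := by nlinarith
    have := mul_pos (by linarith : (0:ℝ) < α ^ 2 - 1) (by linarith : (0:ℝ) < ‖xE - xP‖ ^ 2 - r ^ 2)
    linarith
  rcases lt_or_ge d2h₁ 0 with h | h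
  · exact lt_of_lt_of_le h (hh₂ ▸ Real.sqrt_nonneg _)
  · rw [hh₂, show d2h₁ < Real.sqrt _ ↔ _ from Real.lt_sqrt h]
    have hip : ⟪xE - xP, e⟫ ≤ 0 := by linarith [hd2h₁ ▸ h]
    have hαr : 0 ≤ α * r := by positivity
    nlinarith [sq_nonneg h₁]
end

section
/- Let h₁ ≤ −αr with α > 1, r ≥ 0, and let h₂ = √(h₁² + (α² − 1)(d² − r²)) where d > r. Then h₂² − (h₁ + αr)² ≥ α²r² > 0 whenever r > 0, and in all cases h₂² − (h₁ + αr)² > 0; consequently h₂ > −h₁ − αr. -/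
/-- Key scalar inequality in the strict-convexity proof of the evasion space:
if `h₁ ≤ −αr`, then `h₂² − (h₁ + αr)²` is at least `α²r²` and positive, hence
`h₂ > −h₁ − αr`. -/
theorem h2_sq_sub_sq_pos (α r d h₁ : ℝ) (hα : 1 < α) (hr : 0 ≤ r) (hd : r < d)
    (hh₁ : h₁ ≤ -(α * r))
    (h₂ : ℝ) (hh₂ : h₂ = Real.sqrt (h₁ ^ 2 + (α ^ 2 - 1) * (d ^ 2 - r ^ 2))) :
    (0 < r → α ^ 2 * r ^ 2 ≤ h₂ ^ 2 - (h₁ + α * r) ^ 2 ∧ 0 < α ^ 2 * r ^ 2) ∧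
    0 < h₂ ^ 2 - (h₁ + α * r) ^ 2 ∧
    -h₁ - α * r < h₂ := by
  have hdr : 0 < d ^ 2 - r ^ 2 := by nlinarith
  have hα0 : 0 < α := lt_trans one_pos hα
  have hα2 : 0 < α ^ 2 - 1 := by nlinarith
  have hkey : α * r * h₁ ≤ α * r * (-(α * r)) :=
    mul_le_mul_of_nonneg_left hh₁ (by positivity)
  have hprod := mul_pos hα2 hdr
  have harg : 0 ≤ h₁ ^ 2 + (α ^ 2 - 1) * (d ^ 2 - r ^ 2) := by nlinarith [sq_nonneg h₁]
  have hsq : h₂ ^ 2 = h₁ ^ 2 + (α ^ 2 - 1) * (d ^ 2 - r ^ 2) := by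
    rw [hh₂, Real.sq_sqrt harg]
  have  := hh₂ ▸ Real.sqrt_nonneg _
  have hpos : 0 < h₂ ^ 2 - (h₁ + α * r) ^ 2 := by nlinarith
  refine ⟨fun hr0 => ⟨by nlinarith, by positivity⟩, hpos, ?_⟩
  nlinarith [sq_nonneg (h₂ - (-h₁ - α * r))]
end

section
/- Let α > 1, r ≥ 0, d > r, and let h₁: ℝ → ℝ be smooth with h₁'' = −h₁ − αr and (h₁')² + (h₁ + αr)² ≤ d² (so h₁ + αr is a coordinate of a vector of norm ≤ d). Define h₂ = √(h₁² + (α² − 1)(d² − r²)) and ρ = (h₁ + h₂)/(α² − 1). Then ρ² + 2(ρ')² − ρρ'' ≥ ((h₂ + h₁)²/(α² − 1)²)(1 − h₁''/h₂) > 0. -/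
/-- Curvature positivity computation for the polar parameterization
`ρ = (h₁ + h₂)/(α² − 1)` of the evasion-space boundary. -/
theorem polar_curvature_positivity (α r d : ℝ) (hα : 1 < α) (hr : 0 ≤ r) (hd : r < d)
    (h₁ : ℝ → ℝ) (hsmooth : ContDiff ℝ (⊤ : ℕ∞) h₁)
    (hODE : ∀ ψ : ℝ, deriv (deriv h₁) ψ = -h₁ ψ - α * r)
    (hbound : ∀ ψ : ℝ, (deriv h₁ ψ) ^ 2 + (h₁ ψ + α * r) ^ 2 ≤ d ^ 2)
    (h₂ ρ : ℝ → ℝ)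
    (hh₂ : ∀ ψ, h₂ ψ = Real.sqrt ((h₁ ψ) ^ 2 + (α ^ 2 - 1) * (d ^ 2 - r ^ 2)))
    (hρ : ∀ ψ, ρ ψ = (h₁ ψ + h₂ ψ) / (α ^ 2 - 1)) :
    ∀ ψ : ℝ,
      ((h₂ ψ + h₁ ψ) ^ 2 / (α ^ 2 - 1) ^ 2) * (1 - deriv (deriv h₁) ψ / h₂ ψ) ≤
        ρ ψ ^ 2 + 2 * (deriv ρ ψ) ^ 2 - ρ ψ * deriv (deriv ρ) ψ ∧
      0 < ((h₂ ψ + h₁ ψ) ^ 2 / (α ^ 2 - 1) ^ 2) * (1 - deriv (deriv h₁) ψ / h₂ ψ) := by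
  have hk : (0:ℝ) < α ^ 2 - 1 := by nlinarith
  have hk0 : (α:ℝ) ^ 2 - 1 ≠ 0 := ne_of_gt hk
  set c : ℝ := (α ^ 2 - 1) * (d ^ 2 - r ^ 2) with hcdef
  have hcpos : 0 < c := by
    apply mul_pos hk; nlinarith
  have hd1 : Differentiable ℝ h₁ := hsmooth.differentiable (by simp)
  have hinf : ContDiff ℝ ((⊤ : ℕ∞) : WithTop ℕ∞) h₁ := hsmooth.of_le (by simp)
  have hd2 : Differentiable ℝ (deriv h₁) :=
    (contDiff_infty_iff_deriv.mp hinf).2.differentiable (by simp)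
  have hpos : ∀ x, 0 < h₁ x ^ 2 + c := fun x => by positivity
  have hS : ∀ x, 0 < Real.sqrt (h₁ x ^ 2 + c) := fun x => Real.sqrt_pos.mpr (hpos x)
  have hS0 : ∀ x, Real.sqrt (h₁ x ^ 2 + c) ≠ 0 := fun x => ne_of_gt (hS x)
  have hSsq : ∀ x, Real.sqrt (h₁ x ^ 2 + c) ^ 2 = h₁ x ^ 2 + c := fun x =>
    Real.sq_sqrt (hpos x).le
  have hSF : ∀ x, 0 < h₁ x + Real.sqrt (h₁ x ^ 2 + c) := by
    intro x
    have h1 : |h₁ x| < Real.sqrt (h₁ x ^ 2 + c) := by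
      have h2 : |h₁ x| = Real.sqrt (h₁ x ^ 2) := (Real.sqrt_sq_eq_abs _).symm
      rw [h2]
      exact Real.sqrt_lt_sqrt (sq_nonneg _) (by linarith)
    have := neg_abs_le (h₁ x)
    linarith
  -- derivative of the sqrt part
  have hgd : ∀ x, HasDerivAt (fun y => Real.sqrt (h₁ y ^ 2 + c))
      (h₁ x * deriv h₁ x / Real.sqrt (h₁ x ^ 2 + c)) x := by
    intro x
    have h1 : HasDerivAt (fun y => h₁ y ^ 2 + c)
        ((2 : ℕ) * h₁ x ^ (2 - 1) * deriv h₁ x) x :=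
      (((hd1 x).hasDerivAt).pow 2).add_const c
    have h2 := h1.sqrt (ne_of_gt (hpos x))
    convert h2 using 1
    push_cast
    field_simp
  have hρfun : ρ = fun x => (h₁ x + Real.sqrt (h₁ x ^ 2 + c)) / (α ^ 2 - 1) :=
    funext fun x => by rw [hρ x, hh₂ x]
  have hρd : ∀ x, HasDerivAt ρ
      ((deriv h₁ x + h₁ x * deriv h₁ x / Real.sqrt (h₁ x ^ 2 + c)) / (α ^ 2 - 1)) x := by
    intro x
    rw [hρfun]
    exact ((hd1 x).hasDerivAt.add (hgd x)).div_const _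
  have hderivρ : deriv ρ = fun x =>
      (deriv h₁ x + h₁ x * deriv h₁ x / Real.sqrt (h₁ x ^ 2 + c)) / (α ^ 2 - 1) :=
    funext fun x => (hρd x).deriv
  intro ψ
  -- second derivative of ρ at ψ
  have hnum : HasDerivAt (fun x => h₁ x * deriv h₁ x)
      (deriv h₁ ψ * deriv h₁ ψ + h₁ ψ * deriv (deriv h₁) ψ) ψ :=
    (hd1 ψ).hasDerivAt.mul (hd2 ψ).hasDerivAt
  have hquot : HasDerivAt (fun x => h₁ x * deriv h₁ x / Real.sqrt (h₁ x ^ 2 + c))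
      (((deriv h₁ ψ * deriv h₁ ψ + h₁ ψ * deriv (deriv h₁) ψ) * Real.sqrt (h₁ ψ ^ 2 + c)
        - h₁ ψ * deriv h₁ ψ * (h₁ ψ * deriv h₁ ψ / Real.sqrt (h₁ ψ ^ 2 + c)))
        / Real.sqrt (h₁ ψ ^ 2 + c) ^ 2) ψ :=
    hnum.div (hgd ψ) (hS0 ψ)
  have e2 : deriv (deriv ρ) ψ =
      (deriv (deriv h₁) ψ +
        ((deriv h₁ ψ * deriv h₁ ψ + h₁ ψ * deriv (deriv h₁) ψ) * Real.sqrt (h₁ ψ ^ 2 + c)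
        - h₁ ψ * deriv h₁ ψ * (h₁ ψ * deriv h₁ ψ / Real.sqrt (h₁ ψ ^ 2 + c)))
        / Real.sqrt (h₁ ψ ^ 2 + c) ^ 2) / (α ^ 2 - 1) := by
    rw [hderivρ]
    exact (((hd2 ψ).hasDerivAt.add hquot).div_const _).deriv
  have e1 : deriv ρ ψ =
      (deriv h₁ ψ + h₁ ψ * deriv h₁ ψ / Real.sqrt (h₁ ψ ^ 2 + c)) / (α ^ 2 - 1) :=
    (hρd ψ).deriv
  -- abbreviations
  set F := h₁ ψ
  set F' := deriv h₁ ψ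
  set F'' := deriv (deriv h₁) ψ
  set S := Real.sqrt (h₁ ψ ^ 2 + c) with hSdef
  have hSψ : 0 < S := hS ψ
  have hSψ0 : S ≠ 0 := ne_of_gt hSψ
  have hSFψ : 0 < F + S := hSF ψ
  have e0 : h₂ ψ = S := hh₂ ψ
  have eρ : ρ ψ = (F + S) / (α ^ 2 - 1) := by rw [hρ ψ, e0]
  constructor
  · have key : ρ ψ ^ 2 + 2 * (deriv ρ ψ) ^ 2 - ρ ψ * deriv (deriv ρ) ψ -
        ((h₂ ψ + h₁ ψ) ^ 2 / (α ^ 2 - 1) ^ 2) * (1 - F'' / h₂ ψ) =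
        F' ^ 2 * (F + S) ^ 3 / ((α ^ 2 - 1) ^ 2 * S ^ 3) := by
      rw [e0, eρ, e1, e2]
      field_simp
      ring
    have hnn : 0 ≤ F' ^ 2 * (F + S) ^ 3 / ((α ^ 2 - 1) ^ 2 * S ^ 3) := by
      apply div_nonneg
      · exact mul_nonneg (sq_nonneg _) (pow_pos hSFψ 3).le
      · positivity
    linarith
  · have hF'' : F'' = -F - α * r := hODE ψ
    rw [e0, hF'']
    have h1 : 1 - (-F - α * r) / S = (S + F + α * r) / S := by
      field_simp
      ring
    rw [h1]
    apply mul_pos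
    · apply div_pos
      · have : 0 < S + F := by linarith
        positivity
      · positivity
    · apply div_pos
      · nlinarith
      · exact hSψ
end

section
/- Let m₁, m₂, m₃ ∈ ℝ³ be linearly independent, b₁, b₂, b₃, c₁, c₂, c₃ ∈ ℝ. Then the number of pairs (ρ, e) ∈ ℝ⁺ × S² satisfying ρ² = c_i + ρ(m_iᵀe − b_i) for i = 1, 2, 3 is at most 4. -/
/-!
Because the `mᵢ` form a basis, the equations say `⟪mᵢ, ρe⟫ = ρ² + bᵢρ - cᵢ`, so with the dual
basis `Dᵢ` (`⟪Dᵢ, mⱼ⟫ = δᵢⱼ`) one gets `ρe = ρ²u + ρv - w` for fixed vectors `u = ∑ Dᵢ`,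
`v = ∑ bᵢDᵢ`, `w = ∑ cᵢDᵢ`. Hence `ρ` determines `e`, and `‖ρe‖ = ρ` becomes a quartic equation
in `ρ` with leading coefficient `‖u‖² ≠ 0`.
-/

open RealInnerProductSpace Polynomial

theorem Polynomial.finite_and_ncard_le_natDegree_of_forall_isRoot {R : Type*} [CommRing R]
    [IsDomain R] {p : R[X]} (hp : p ≠ 0) {s : Set R} (hs : ∀ x ∈ s, p.IsRoot x) :
    s.Finite ∧ s.ncard ≤ p.natDegree := by
  have hsub : s ⊆ p.rootSet R := fun x hx => by
    rw [mem_rootSet_of_ne hp, coe_aeval_eq_eval]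
    exact hs x hx
  exact ⟨(p.rootSet_finite R).subset hsub,
    (Set.ncard_le_ncard hsub (p.rootSet_finite R)).trans (p.ncard_rootSet_le R)⟩

section InnerProductSpace

variable {E : Type*} [NormedAddCommGroup E] [InnerProductSpace ℝ E]

theorem norm_sq_smul_sq_add_smul_sub (u v w : E) (x : ℝ) :
    ‖x ^ 2 • u + x • v - w‖ ^ 2 =
      x ^ 4 * ‖u‖ ^ 2 + 2 * x ^ 3 * ⟪u, v⟫ + x ^ 2 * (‖v‖ ^ 2 - 2 * ⟪u, w⟫)
        - 2 * x * ⟪v, w⟫ + ‖w‖ ^ 2 := by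
  rw [norm_sub_sq_real, norm_add_sq_real, inner_add_left, norm_smul, norm_smul,
    real_inner_smul_left, real_inner_smul_left, real_inner_smul_left, real_inner_smul_right,
    Real.norm_eq_abs, Real.norm_eq_abs, mul_pow, mul_pow, sq_abs, sq_abs]
  ring

theorem finite_and_ncard_le_four_setOf_norm_sq_eq_sq {u : E} (hu : u ≠ 0) (v w : E) :
    {x : ℝ | ‖x ^ 2 • u + x • v - w‖ ^ 2 = x ^ 2}.Finite ∧
      {x : ℝ | ‖x ^ 2 • u + x • v - w‖ ^ 2 = x ^ 2}.ncard ≤ 4 := by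
  set p : ℝ[X] := C (‖u‖ ^ 2) * X ^ 4 + C (2 * ⟪u, v⟫) * X ^ 3
    + C (‖v‖ ^ 2 - 2 * ⟪u, w⟫ - 1) * X ^ 2 - C (2 * ⟪v, w⟫) * X + C (‖w‖ ^ 2)
  have hp : p ≠ 0 := by
    intro h
    have h4 := congrArg (coeff · 4) h
    simp only [p, coeff_add, coeff_sub, coeff_C_mul, coeff_X_pow, coeff_X, coeff_C] at h4
    norm_num [hu] at h4
  have hdeg : p.natDegree ≤ 4 := by
    simp only [p]
    compute_degree
  have hroot : ∀ x ∈ {x : ℝ | ‖x ^ 2 • u + x • v - w‖ ^ 2 = x ^ 2}, p.IsRoot x := by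
    intro x hx
    simp only [Set.mem_ofPred_eq, norm_sq_smul_sq_add_smul_sub] at hx
    simp only [p, IsRoot, eval_add, eval_sub, eval_mul, eval_C, eval_pow, eval_X]
    linear_combination hx
  obtain ⟨hfin, hcard⟩ := finite_and_ncard_le_natDegree_of_forall_isRoot hp hroot
  exact ⟨hfin, hcard.trans hdeg⟩

theorem LinearMap.BilinForm.nondegenerate_innerₗ : (innerₗ E).Nondegenerate :=
  ⟨fun x hx => inner_self_eq_zero.mp (hx x), fun y hy => inner_self_eq_zero.mp (hy y)⟩

def intersectionPoints {ι : Type*} (m : ι → E) (b c : ι → ℝ) : Set (ℝ × E) :=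
  {p | 0 < p.1 ∧ ‖p.2‖ = 1 ∧ ∀ i, p.1 ^ 2 = c i + p.1 * (⟪m i, p.2⟫ - b i)}

variable {ι : Type*} [Fintype ι]

section DecidableEq

variable [DecidableEq ι]

noncomputable def Module.Basis.innerDualBasis (B : Module.Basis ι ℝ E) : Module.Basis ι ℝ E :=
  LinearMap.BilinForm.dualBasis (innerₗ E) LinearMap.BilinForm.nondegenerate_innerₗ B

theorem Module.Basis.sum_inner_smul_innerDualBasis (B : Module.Basis ι ℝ E) (x : E) :
    ∑ i, ⟪x, B i⟫ • B.innerDualBasis i = x := by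
  conv_rhs => rw [← B.innerDualBasis.sum_repr x]
  simp [innerDualBasis]

theorem Module.Basis.sum_innerDualBasis_ne_zero [Nonempty ι] (B : Module.Basis ι ℝ E) :
    ∑ i, B.innerDualBasis i ≠ 0 := by
  intro h
  obtain ⟨j⟩ := ‹Nonempty ι›
  have hj := congrArg (B.innerDualBasis.repr · j) h
  simp [map_sum] at hj

theorem smul_eq_of_mem_intersectionPoints (B : Module.Basis ι ℝ E) {b c : ι → ℝ}
    {p : ℝ × E} (hp : p ∈ intersectionPoints B b c) :
    p.1 • p.2 = p.1 ^ 2 • ∑ i, B.innerDualBasis i + p.1 • ∑ i, b i • B.innerDualBasis i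
      - ∑ i, c i • B.innerDualBasis i := by
  obtain ⟨ρ, e⟩ := p
  obtain ⟨-, -, hsol⟩ := hp
  calc ρ • e = ∑ i, ⟪ρ • e, B i⟫ • B.innerDualBasis i := (B.sum_inner_smul_innerDualBasis _).symm
    _ = ∑ i, (ρ ^ 2 • B.innerDualBasis i + ρ • b i • B.innerDualBasis i
          - c i • B.innerDualBasis i) := by
      refine Finset.sum_congr rfl fun i _ => ?_
      have hi : ⟪ρ • e, B i⟫ = ρ ^ 2 + ρ * b i - c i := by
        rw [real_inner_smul_left, real_inner_comm]
        linear_combination -(hsol i)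
      rw [hi, sub_smul, add_smul, mul_smul]
    _ = _ := by simp only [Finset.sum_add_distrib, Finset.sum_sub_distrib, Finset.smul_sum]

end DecidableEq

theorem intersectionPoints_finite_and_ncard_le_four [Nonempty ι] (B : Module.Basis ι ℝ E)
    (b c : ι → ℝ) :
    (intersectionPoints B b c).Finite ∧ (intersectionPoints B b c).ncard ≤ 4 := by
  classical
  set u := ∑ i, B.innerDualBasis i
  set v := ∑ i, b i • B.innerDualBasis i
  set w := ∑ i, c i • B.innerDualBasis i
  have hmaps : Set.MapsTo Prod.fst (intersectionPoints B b c)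
      {x : ℝ | ‖x ^ 2 • u + x • v - w‖ ^ 2 = x ^ 2} := by
    intro p hp
    rw [Set.mem_ofPred_eq, ← smul_eq_of_mem_intersectionPoints B hp, norm_smul, hp.2.1,
      mul_one, Real.norm_eq_abs, sq_abs]
  have hinj : Set.InjOn Prod.fst (intersectionPoints B b c) := by
    intro p hp q hq (hpq : p.1 = q.1)
    refine Prod.ext hpq (smul_right_injective E hp.1.ne' ?_)
    change p.1 • p.2 = p.1 • q.2
    rw [smul_eq_of_mem_intersectionPoints B hp, hpq, ← smul_eq_of_mem_intersectionPoints B hq]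
  obtain ⟨hfin, hcard⟩ :=
    finite_and_ncard_le_four_setOf_norm_sq_eq_sq B.sum_innerDualBasis_ne_zero v w
  exact ⟨hfin.of_injOn hmaps hinj, (Set.ncard_le_ncard_of_injOn _ hmaps hinj hfin).trans hcard⟩

end InnerProductSpace

/-- The system `ρ² = cᵢ + ρ(mᵢᵀe − bᵢ)`, `i = 1,2,3`, with `ρ > 0` and `e` a
unit vector, has at most 4 solutions when `m₁, m₂, m₃` are linearly
independent. -/
theorem intersection_points_at_most_four
    (m : Fin 3 → EuclideanSpace ℝ (Fin 3)) (b c : Fin 3 → ℝ)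
    (hm : LinearIndependent ℝ m) :
    {p : ℝ × EuclideanSpace ℝ (Fin 3) |
        0 < p.1 ∧ ‖p.2‖ = 1 ∧
        ∀ i : Fin 3, p.1 ^ 2 = c i + p.1 * (⟪m i, p.2⟫ - b i)}.Finite ∧
    {p : ℝ × EuclideanSpace ℝ (Fin 3) |
        0 < p.1 ∧ ‖p.2‖ = 1 ∧
        ∀ i : Fin 3, p.1 ^ 2 = c i + p.1 * (⟪m i, p.2⟫ - b i)}.ncard ≤ 4 := by
  have h := intersectionPoints_finite_and_ncard_le_four
    (basisOfLinearIndependentOfCardEqFinrank hm (by simp)) b c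
  rwa [coe_basisOfLinearIndependentOfCardEqFinrank] at h
end

section
/- Let m₁, m₂, m₃ ∈ ℝ³ and b₁, b₂, b₃, c₁, c₂, c₃ ∈ ℝ. If ρ > 0 and e ∈ ℝ³ satisfy ρ² = c_i + ρ(m_iᵀe − b_i) for i = 1, 2, 3, then ((c₂ − c₃)m₁ + (c₃ − c₁)m₂ + (c₁ − c₂)m₃)ᵀe = (c₃ − c₂)(b₂ − b₁) − (c₂ − c₁)(b₃ − b₂). -/
open RealInnerProductSpace

/-- Eliminating `ρ²` from the three equations `ρ² = cᵢ + ρ(mᵢᵀe − bᵢ)` yields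
a fixed linear constraint on `e`. -/
theorem plane_constraint_of_system
    (m : Fin 3 → EuclideanSpace ℝ (Fin 3)) (b c : Fin 3 → ℝ)
    (ρ : ℝ) (hρ : 0 < ρ) (e : EuclideanSpace ℝ (Fin 3))
    (hsys : ∀ i : Fin 3, ρ ^ 2 = c i + ρ * (⟪m i, e⟫ - b i)) :
    ⟪(c 1 - c 2) • m 0 + (c 2 - c 0) • m 1 + (c 0 - c 1) • m 2, e⟫ =
      (c 2 - c 1) * (b 1 - b 0) - (c 1 - c 0) * (b 2 - b 1) := by
  have h0 := hsys 0
  have h1 := hsys 1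
  have h2 := hsys 2
  simp only [inner_add_left, inner_smul_left, RCLike.ofReal_real_eq_id, id_eq,
    conj_trivial]
  set x0 := ⟪m 0, e⟫
  set x1 := ⟪m 1, e⟫
  set x2 := ⟪m 2, e⟫
  have hρ' : ρ ≠ 0 := ne_of_gt hρ
  have key : ρ * ((c 1 - c 2) * x0 + (c 2 - c 0) * x1 + (c 0 - c 1) * x2) =
      ρ * ((c 2 - c 1) * (b 1 - b 0) - (c 1 - c 0) * (b 2 - b 1)) := by
    have h01 : ρ * (x0 - x1 - (b 0 - b 1)) = c 1 - c 0 := by linear_combination h1 - h0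
    have h12 : ρ * (x1 - x2 - (b 1 - b 2)) = c 2 - c 1 := by linear_combination h2 - h1
    linear_combination (c 1 - c 2) * h01 + (c 1 - c 0) * h12
  exact mul_left_cancel₀ hρ' key
end
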